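/- Let p ≥ 2 be an integer and 0 < ♮ ≤ (p-1)^{p-1}/p^p. If a sequence (♦_k) of nonnegative reals satisfies ♦_1 ≤ 1 + ♮ and ♦_k ≤ 1 + ♮·(♦_{k-1})^p for k ≥ 2, then ♦_k ≤ p/(p-1) for all k ≥ 1. -/

import Mathlib

/-!
The constant `(p-1)^(p-1)/p^p` is the maximum of `(x - 1)/x^p` over `x > 1`, attained at
`B = p/(p-1)`; hence `1 + c B^p ≤ B` for every `c` up to it, so the map `x ↦ 1 + c x^p` sends
`[0, B]` into itself and the bound propagates along the recursion by induction.
-/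

lemma sub_one_pow_div_pow_mul_div_sub_one_pow {p : ℕ} (hp : 2 ≤ p) :
    ((p : ℝ) - 1) ^ (p - 1) / (p : ℝ) ^ p * ((p : ℝ) / ((p : ℝ) - 1)) ^ p
      = 1 / ((p : ℝ) - 1) := by
  have hp1 : (p : ℝ) - 1 ≠ 0 := by
    have : (2 : ℝ) ≤ p := by exact_mod_cast hp
    linarith
  have hp0 : (p : ℝ) ≠ 0 := by positivity
  obtain ⟨n, rfl⟩ : ∃ n, p = n + 1 := ⟨p - 1, by omega⟩
  rw [Nat.add_sub_cancel, div_pow, pow_succ ((n + 1 : ℕ) - 1 : ℝ)]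
  field_simp

lemma one_add_mul_pow_le_div_sub_one {p : ℕ} (hp : 2 ≤ p) {c : ℝ}
    (hc : c ≤ ((p : ℝ) - 1) ^ (p - 1) / (p : ℝ) ^ p) :
    1 + c * ((p : ℝ) / ((p : ℝ) - 1)) ^ p ≤ (p : ℝ) / ((p : ℝ) - 1) := by
  have hp1 : (0 : ℝ) < (p : ℝ) - 1 := by
    have : (2 : ℝ) ≤ p := by exact_mod_cast hp
    linarith
  calc 1 + c * ((p : ℝ) / ((p : ℝ) - 1)) ^ p
      ≤ 1 + ((p : ℝ) - 1) ^ (p - 1) / (p : ℝ) ^ p * ((p : ℝ) / ((p : ℝ) - 1)) ^ p := by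
        gcongr
    _ = (p : ℝ) / ((p : ℝ) - 1) := by
        rw [sub_one_pow_div_pow_mul_div_sub_one_pow hp]
        field_simp
        ring

lemma one_add_mul_pow_le_of_le {p : ℕ} {c x B : ℝ} (hc : 0 ≤ c) (hx : 0 ≤ x) (hxB : x ≤ B)
    (hB : 1 + c * B ^ p ≤ B) : 1 + c * x ^ p ≤ B := by
  have : c * x ^ p ≤ c * B ^ p := by gcongr
  linarith

lemma le_of_le_one_add_mul_pow {p : ℕ} {c B : ℝ} (hc : 0 ≤ c) (hB₀ : 0 ≤ B)
    (hB : 1 + c * B ^ p ≤ B) {d : ℕ → ℝ} (hd : ∀ k, 0 ≤ d k) (h1 : d 1 ≤ 1 + c)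
    (hrec : ∀ k, 2 ≤ k → d k ≤ 1 + c * d (k - 1) ^ p) :
    ∀ k, 1 ≤ k → d k ≤ B := by
  intro k hk
  induction k, hk using Nat.le_induction with
  | base =>
    have h1B : 1 ≤ B := by nlinarith [pow_nonneg hB₀ p]
    calc d 1 ≤ 1 + c * 1 ^ p := by simpa using h1
      _ ≤ B := one_add_mul_pow_le_of_le hc zero_le_one h1B hB
  | succ k _ ih =>
    calc d (k + 1) ≤ 1 + c * d k ^ p := hrec (k + 1) (by omega)
      _ ≤ B := one_add_mul_pow_le_of_le hc (hd k) ih hB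

theorem stmt_3 (p : ℕ) (hp : 2 ≤ p) (nat : ℝ) (hn0 : 0 < nat)
    (hn1 : nat ≤ ((p : ℝ) - 1) ^ (p - 1) / (p : ℝ) ^ p)
    (d : ℕ → ℝ) (hnn : ∀ k, 0 ≤ d k)
    (h1 : d 1 ≤ 1 + nat)
    (hrec : ∀ k, 2 ≤ k → d k ≤ 1 + nat * (d (k - 1)) ^ p) :
    ∀ k, 1 ≤ k → d k ≤ (p : ℝ) / ((p : ℝ) - 1) := by
  have hp1 : (0 : ℝ) ≤ (p : ℝ) - 1 := by
    have : (2 : ℝ) ≤ p := by exact_mod_cast hp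
    linarith
  exact le_of_le_one_add_mul_pow hn0.le (by positivity)
    (one_add_mul_pow_le_div_sub_one hp hn1) hnn h1 hrec
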